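/- arXiv:2202.04716 — 5 statements merged into one kernel-verified Lean document; each statement's English description precedes it below -/
import Mathlib

section
/- Given any infinite set x ⊆ ℕ and any countable family {xₙ : n ∈ ℕ} of infinite subsets of x, there exists an infinite set y ⊆ x such that xₙ ≪ y for every n. -/
noncomputable def enum (x : Set ℕ) (n : ℕ) : ℕ := Nat.nth (· ∈ x) n
noncomputable def S0 (x : Set ℕ) : Set ℕ := Set.range (fun n => enum x (n+1))
noncomputable def S1 (x : Set ℕ) : Set ℕ := Set.range (fun n => enum x (2*n+1))
def sle (x y : Set ℕ) : Prop := ∀ n, enum x n ≤ enum y n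
def ll (a b : Set ℕ) : Prop := ∀ m, ∃ k, m < (a ∩ Set.Ioo (enum b k) (enum b (k+1))).ncard
def Estep (x y : Set ℕ) : Prop := x.Infinite ∧ (y = S0 x ∨ y = S1 x)
def E : Set ℕ → Set ℕ → Prop := Relation.EqvGen Estep
def G (x x' : Set ℕ) : Prop := x' = S0 x ∨ x' = S1 x ∨ x = S0 x' ∨ x = S1 x'
def toSet (f : ℕ → Bool) : Set ℕ := {n | f n = true}
noncomputable def Sb (b : Bool) : Set ℕ → Set ℕ := if b then S1 else S0
noncomputable def Siter : List Bool → Set ℕ → Set ℕ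
  | [], y => y
  | b :: rest, y => Siter rest (Sb b y)

open Classical in
lemma count_range_strictMono {f : ℕ → ℕ} (hf : StrictMono f) (n : ℕ) :
    Nat.count (· ∈ Set.range f) (f n) = n := by
  rw [Nat.count_eq_card_filter_range]
  have h : {x ∈ Finset.range (f n) | x ∈ Set.range f} = (Finset.range n).image f := by
    ext a
    simp only [Finset.mem_filter, Finset.mem_range, Finset.mem_image, Set.mem_range]
    constructor
    · rintro ⟨ha, j, rfl⟩
      exact ⟨j, hf.lt_iff_lt.1 ha, rfl⟩
    · rintro ⟨j, hj, rfl⟩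
      exact ⟨hf hj, j, rfl⟩
  rw [h, Finset.card_image_of_injective _ hf.injective, Finset.card_range]

lemma nth_range_strictMono {f : ℕ → ℕ} (hf : StrictMono f) (n : ℕ) :
    Nat.nth (· ∈ Set.range f) n = f n := by
  classical
  conv_lhs => rw [← count_range_strictMono hf n]
  exact Nat.nth_count ⟨n, rfl⟩

theorem stmt5 (x : Set ℕ) (hx : x.Infinite) (xs : ℕ → Set ℕ)
    (hxs : ∀ n, (xs n).Infinite ∧ xs n ⊆ x) :
    ∃ y, y ⊆ x ∧ y.Infinite ∧ ∀ n, ll (xs n) y := by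
  classical
  choose g hgmem hggt using fun a => hx.exists_gt a
  set B : ℕ → ℕ → ℕ := fun k t =>
    max t ((Finset.range (k+1)).sup fun i => Nat.nth (fun a => a ∈ xs i ∧ t < a) k) with hB
  set f : ℕ → ℕ := fun k => Nat.rec (g 0) (fun k fk => g (B k fk)) k with hfdef
  have hfs : ∀ k, f (k+1) = g (B k (f k)) := fun k => rfl
  have hfmem : ∀ k, f k ∈ x := by
    intro k; cases k with
    | zero => exact hgmem 0
    | succ k => exact hgmem _
  have hBge : ∀ k, f k ≤ B k (f k) := fun k => le_max_left _ _
  have hfmono : StrictMono f :=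
    strictMono_nat_of_lt_succ fun k => lt_of_le_of_lt (hBge k) (hggt (B k (f k)))
  have hinf : ∀ i t, {a | a ∈ xs i ∧ t < a}.Infinite := by
    intro i t
    refine (((hxs i).1).diff (Set.finite_Iic t)).mono ?_
    rintro a ⟨h1, h2⟩
    exact ⟨h1, not_le.1 h2⟩
  -- counting claim
  have hcount : ∀ i k, i ≤ k → (k + 1 : ℕ) ≤ (xs i ∩ Set.Ioo (f k) (f (k+1))).ncard := by
    intro i k hik
    set p : ℕ → Prop := fun a => a ∈ xs i ∧ f k < a with hp
    have hpinf : {a | p a}.Infinite := hinf i (f k)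
    have hnth_lt : ∀ j ≤ k, Nat.nth p j < f (k+1) := by
      intro j hj
      have h1 : Nat.nth p j ≤ Nat.nth p k := (Nat.nth_strictMono hpinf).monotone hj
      have h2 : Nat.nth p k ≤ B k (f k) := by
        have hle : Nat.nth (fun a => a ∈ xs i ∧ f k < a) k ≤
            (Finset.range (k+1)).sup (fun i => Nat.nth (fun a => a ∈ xs i ∧ f k < a) k) :=
          Finset.le_sup (f := fun i => Nat.nth (fun a => a ∈ xs i ∧ f k < a) k) (Finset.mem_range.2 (Nat.lt_succ_of_le hik))
        exact le_trans hle (le_max_right _ _)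
      exact lt_of_le_of_lt (le_trans h1 h2) (hggt (B k (f k)))
    set T : Finset ℕ := (Finset.range (k+1)).image (Nat.nth p) with hT
    have hTcard : T.card = k + 1 := by
      rw [hT, Finset.card_image_of_injective _ (Nat.nth_strictMono hpinf).injective,
        Finset.card_range]
    have hTsub : ↑T ⊆ xs i ∩ Set.Ioo (f k) (f (k+1)) := by
      intro a ha
      simp only [hT, Finset.coe_image, Set.mem_image, Finset.coe_range, Set.mem_Iio] at ha
      obtain ⟨j, hj, rfl⟩ := ha
      have hmem : p (Nat.nth p j) := Nat.nth_mem_of_infinite hpinf j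
      exact ⟨hmem.1, hmem.2, hnth_lt j (Nat.lt_succ_iff.1 hj)⟩
    have hfin : (xs i ∩ Set.Ioo (f k) (f (k+1))).Finite :=
      (Set.finite_Ioo _ _).subset (Set.inter_subset_right)
    calc (k + 1 : ℕ) = (↑T : Set ℕ).ncard := by rw [Set.ncard_coe_finset, hTcard]
      _ ≤ _ := Set.ncard_le_ncard hTsub hfin
  refine ⟨Set.range f, ?_, ?_, ?_⟩
  · rintro a ⟨k, rfl⟩; exact hfmem k
  · exact Set.infinite_range_of_injective hfmono.injective
  · intro n m
    refine ⟨max n m, ?_⟩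
    have he : ∀ j, enum (Set.range f) j = f j := fun j => nth_range_strictMono hfmono j
    rw [he, he]
    calc m < max n m + 1 := Nat.lt_succ_of_le (le_max_right n m)
      _ ≤ _ := hcount n (max n m) (le_max_left n m)
end

section
/- Let E be the smallest equivalence relation on infinite subsets of ℕ containing all pairs (x, S₀(x)) and (x, S₁(x)). Then for every infinite x ⊆ ℕ there exist infinite y, z ⊆ x with y ∩ z = ∅ such that y E z E x. -/
/-! Take `y = S₁(x) = {x₁, x₃, x₅, …}` and `z = S₁(S₀(x)) = {x₂, x₄, x₆, …}`: they are disjoint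
because their elements have indices of different parity, `z E S₀(x) E x` by two generating steps,
and `y E x E z` by transitivity. -/

section Enumeration

variable {x : Set ℕ}

lemma enum_strictMono (hx : x.Infinite) : StrictMono (enum x) :=
  Nat.nth_strictMono hx

lemma enum_range_of_strictMono {f : ℕ → ℕ} (hf : StrictMono f) : enum (Set.range f) = f :=
  ((enum_strictMono (Set.infinite_range_of_injective hf.injective)).range_inj hf).1
    (Nat.range_nth_of_infinite (Set.infinite_range_of_injective hf.injective))

lemma range_enum_comp_subset (hx : x.Infinite) (g : ℕ → ℕ) :
    Set.range (fun n => enum x (g n)) ⊆ x := by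
  rintro _ ⟨n, rfl⟩
  exact Nat.nth_mem_of_infinite hx (g n)

lemma infinite_range_enum_comp (hx : x.Infinite) {g : ℕ → ℕ} (hg : g.Injective) :
    (Set.range fun n => enum x (g n)).Infinite :=
  Set.infinite_range_of_injective ((enum_strictMono hx).injective.comp hg)

lemma enum_S0 (hx : x.Infinite) : enum (S0 x) = fun n => enum x (n + 1) :=
  enum_range_of_strictMono fun _ _ h => enum_strictMono hx (Nat.succ_lt_succ h)

end Enumeration

section Shifts

variable {x : Set ℕ}

lemma S0_subset (hx : x.Infinite) : S0 x ⊆ x := range_enum_comp_subset hx _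

lemma S1_subset (hx : x.Infinite) : S1 x ⊆ x := range_enum_comp_subset hx _

lemma S0_infinite (hx : x.Infinite) : (S0 x).Infinite :=
  infinite_range_enum_comp hx (add_left_injective 1)

lemma S1_infinite (hx : x.Infinite) : (S1 x).Infinite :=
  infinite_range_enum_comp hx fun a b h => by omega

lemma E_S0 (hx : x.Infinite) : E x (S0 x) := Relation.EqvGen.rel _ _ ⟨hx, Or.inl rfl⟩

lemma E_S1 (hx : x.Infinite) : E x (S1 x) := Relation.EqvGen.rel _ _ ⟨hx, Or.inr rfl⟩

lemma S1_inter_S1_S0_eq_empty (hx : x.Infinite) : S1 x ∩ S1 (S0 x) = ∅ := by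
  refine Set.eq_empty_of_forall_notMem ?_
  rintro _ ⟨⟨n, rfl⟩, ⟨m, hm⟩⟩
  rw [enum_S0 hx] at hm
  have := (enum_strictMono hx).injective hm
  omega

end Shifts

theorem stmt7 (x : Set ℕ) (hx : x.Infinite) :
    ∃ y z : Set ℕ, y ⊆ x ∧ z ⊆ x ∧ y.Infinite ∧ z.Infinite ∧ y ∩ z = ∅ ∧
      E y z ∧ E z x := by
  have hS0 := S0_infinite hx
  have hE : Equivalence E := Relation.EqvGen.is_equivalence _
  have hzx : E (S1 (S0 x)) x := hE.symm (hE.trans (E_S0 hx) (E_S1 hS0))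
  exact ⟨S1 x, S1 (S0 x), S1_subset hx, (S1_subset hS0).trans (S0_subset hx),
    S1_infinite hx, S1_infinite hS0, S1_inter_S1_S0_eq_empty hx,
    hE.trans (hE.symm (E_S1 hx)) (hE.symm hzx), hzx⟩
end

section
/- Assume E is an equivalence relation on the space of infinite subsets of ℕ such that for every infinite x: (a) there exist almost disjoint infinite y, z ⊆ x with y E z E x, and (b) the restriction of E to infinite subsets of x has uncountably many classes. Suppose that for every sequence of Borel functions fₙ : [ℕ]^ℕ → (2^ℕ) there is an infinite x and a countable set C such that for all almost disjoint infinite y, z ⊆ x and all n, fₙ(y) = fₙ(z) implies fₙ(y) ∈ C. Then E is not hypersmooth, i.e., E does not Borel-reduce to E₁. -/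
abbrev InfS := {f : ℕ → Bool // (toSet f).Infinite}
def tset (g : InfS) : Set ℕ := toSet g.1
def E1 (u v : ℕ → ℕ → Bool) : Prop := {n | u n ≠ v n}.Finite

open Classical in
noncomputable def relRep {α β : Type*} (Q : β → α → Prop) (d : α) (b : β) : α :=
  if h : ∃ a, Q b a then h.choose else d

lemma relRep_spec {α β : Type*} (Q : β → α → Prop) (d : α) (b : β) (h : ∃ a, Q b a) :
    Q b (relRep Q d b) := by
  unfold relRep
  rw [dif_pos h]
  exact h.choose_spec

lemma E1_bound {u v : ℕ → ℕ → Bool} (h : E1 u v) : ∃ N, ∀ n, N ≤ n → u n = v n := by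
  obtain ⟨B, hB⟩ := h.bddAbove
  refine ⟨B + 1, fun n hn => ?_⟩
  by_contra hne
  have : n ≤ B := hB hne
  omega

theorem stmt13 (E : InfS → InfS → Prop) (hEq : Equivalence E)
    (ha : ∀ x : InfS, ∃ y z : InfS, tset y ⊆ tset x ∧ tset z ⊆ tset x ∧
      (tset y ∩ tset z).Finite ∧ E y z ∧ E z x)
    (hb : ∀ x : InfS, ∀ C : Set InfS, C.Countable → ∃ y : InfS, tset y ⊆ tset x ∧
      ∀ c ∈ C, ¬ E y c)
    (hcanon : ∀ f : ℕ → InfS → (ℕ → Bool), (∀ n, Measurable (f n)) →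
      ∃ x : InfS, ∃ C : Set (ℕ → Bool), C.Countable ∧
        ∀ y z : InfS, tset y ⊆ tset x → tset z ⊆ tset x → (tset y ∩ tset z).Finite →
          ∀ n, f n y = f n z → f n y ∈ C) :
    ¬ ∃ φ : InfS → (ℕ → ℕ → Bool), Measurable φ ∧ ∀ a b, (E a b ↔ E1 (φ a) (φ b)) := by
  classical
  rintro ⟨φ, hφ, hred⟩
  -- the coded tail functions
  set f : ℕ → InfS → (ℕ → Bool) :=
    fun n u p => φ u (n + (Nat.unpair p).1) (Nat.unpair p).2 with hf
  have hfm : ∀ n, Measurable (f n) := by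
    intro n
    apply measurable_pi_lambda
    intro p
    exact (measurable_pi_apply _).comp ((measurable_pi_apply _).comp hφ)
  obtain ⟨x, C, hC, hcan⟩ := hcanon f hfm
  -- Q c N w : the tail of φ w from N is (eventually) coded by c with shift N
  set Q : (ℕ → Bool) × ℕ → InfS → Prop :=
    fun cN w => ∃ M, ∀ n, cN.2 ≤ n → M ≤ n → ∀ k,
      φ w n k = cN.1 (Nat.pair (n - cN.2) k) with hQdef
  -- same (c, N) forces E-equivalence
  have hQE : ∀ cN w w', Q cN w → Q cN w' → E w w' := by
    rintro ⟨c, N⟩ w w' ⟨M, hM⟩ ⟨M', hM'⟩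
    rw [hred]
    apply Set.Finite.subset (Set.finite_Iio (max N (max M M')))
    intro n hn
    simp only [Set.mem_Iio]
    by_contra hlt
    push_neg at hlt
    have h1 : N ≤ n := le_trans (le_max_left _ _) hlt
    have h2 : M ≤ n := le_trans (le_trans (le_max_left _ _) (le_max_right _ _)) hlt
    have h3 : M' ≤ n := le_trans (le_trans (le_max_right _ _) (le_max_right _ _)) hlt
    apply hn
    funext k
    rw [hM n h1 h2 k, hM' n h1 h3 k]
  -- every infinite subset of x satisfies Q for some c ∈ C and N
  have key : ∀ w : InfS, tset w ⊆ tset x → ∃ c ∈ C, ∃ N, Q (c, N) w := by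
    intro w hw
    obtain ⟨y, z, hyw, hzw, had, hEyz, hEzw⟩ := ha w
    obtain ⟨N, hN⟩ := E1_bound ((hred y z).mp hEyz)
    have hfeq : f N y = f N z := by
      funext p
      simp only [hf]
      rw [hN _ (Nat.le_add_right _ _)]
    have hc : f N y ∈ C := hcan y z (hyw.trans hw) (hzw.trans hw) had N hfeq
    refine ⟨f N y, hc, N, ?_⟩
    have hEwy : E w y := hEq.symm (hEq.trans hEyz hEzw)
    obtain ⟨M, hM⟩ := E1_bound ((hred w y).mp hEwy)
    refine ⟨M, fun n hNn hMn k => ?_⟩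
    rw [hM n hMn]
    simp only [hf, Nat.unpair_pair]
    congr 1
    omega
  -- countable set of representatives
  set rep : (ℕ → Bool) × ℕ → InfS := relRep Q x with hrep
  set C' : Set InfS := rep '' (C ×ˢ (Set.univ : Set ℕ)) with hC'def
  have hC' : C'.Countable := (hC.prod Set.countable_univ).image rep
  obtain ⟨y, hyx, hy⟩ := hb x C' hC'
  obtain ⟨c, hcC, N, hQ⟩ := key y hyx
  have hmem : rep (c, N) ∈ C' := ⟨(c, N), ⟨hcC, trivial⟩, rfl⟩
  exact hy _ hmem (hQE (c, N) y _ hQ (relRep_spec Q x (c, N) ⟨y, hQ⟩))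
end

section
/- Let Γ : [x]^ℕ → [ℕ]^{≤ℕ} be a continuous function on the infinite subsets of a fixed infinite x ⊆ ℕ such that no value Γ(y) is a proper initial segment of another value Γ(z) (with respect to increasing enumerations). If Γ(y) is finite for some y ∈ [x]^ℕ, then for every x' ∈ [x]^ℕ there exists x'' ∈ [x]^ℕ with x'' E₀-equivalent to x' (i.e., x'' Δ x' finite) and Γ(x'') = Γ(y). -/
/-!
If `Γ y` is finite, it is bounded by some `M`, and by continuity `Γ z` agrees with `Γ y` below `M`
as soon as `z` agrees with `y` on a suitable finite set `I`. Splicing `y` on `I` with `x'` off `I`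
gives such a `z = x''`, which differs from `x'` only on `I`. Then `Γ y` is an initial segment of
`Γ x''`, and since it cannot be a proper one, `Γ x'' = Γ y`.
-/

open Filter Topology

def IsProperInitialSegment (A B : Set ℕ) : Prop :=
  A ⊆ B ∧ A ≠ B ∧ ∀ a ∈ A, ∀ b ∈ B \ A, a < b

theorem toSet_injective : Function.Injective toSet := fun _ _ h =>
  funext fun n => Bool.eq_iff_iff.2 (Set.ext_iff.1 h n)

theorem toSet_eq_or_isProperInitialSegment {f g : ℕ → Bool} {M : ℕ}
    (hM : toSet f ⊆ Set.Iic M) (h : ∀ n ≤ M, g n = f n) :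
    toSet f = toSet g ∨ IsProperInitialSegment (toSet f) (toSet g) := by
  have hsub : toSet f ⊆ toSet g := fun a ha => by
    simpa only [toSet, Set.mem_ofPred_eq, h a (hM ha)] using ha
  have hlt : ∀ a ∈ toSet f, ∀ b ∈ toSet g \ toSet f, a < b := by
    rintro a ha b ⟨hbg, hbf⟩
    by_contra! hba
    simp only [toSet, Set.mem_ofPred_eq, h b (hba.trans (hM ha))] at hbg hbf
    exact hbf hbg
  by_cases heq : toSet f = toSet g
  · exact .inl heq
  · exact .inr ⟨hsub, heq, hlt⟩

section Piecewise

variable {s : Set ℕ} [DecidablePred (· ∈ s)] {f g : ℕ → Bool}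

theorem toSet_piecewise_subset : toSet (s.piecewise f g) ⊆ toSet f ∪ toSet g := by
  intro n hn
  by_cases hs : n ∈ s
  · left
    simpa only [toSet, Set.mem_ofPred_eq, Set.piecewise_eq_of_mem _ _ _ hs] using hn
  · right
    simpa only [toSet, Set.mem_ofPred_eq, Set.piecewise_eq_of_notMem _ _ _ hs] using hn

theorem toSet_diff_subset_toSet_piecewise : toSet g \ s ⊆ toSet (s.piecewise f g) :=
  fun n ⟨hn, hs⟩ => by
    simpa only [toSet, Set.mem_ofPred_eq, Set.piecewise_eq_of_notMem _ _ _ hs] using hn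

theorem symmDiff_toSet_piecewise_subset : symmDiff (toSet (s.piecewise f g)) (toSet g) ⊆ s := by
  intro n hn
  by_contra hs
  simp only [Set.mem_symmDiff, toSet, Set.mem_ofPred_eq,
    Set.piecewise_eq_of_notMem _ _ _ hs] at hn
  tauto

end Piecewise

theorem exists_finite_forall_eq_of_continuous {ι α κ β : Type*}
    [TopologicalSpace α] [DiscreteTopology α] [TopologicalSpace β] [DiscreteTopology β]
    {S : Set (ι → α)} {F : S → κ → β} (hF : Continuous F) (y : S) (J : Finset κ) :
    ∃ I : Set ι, I.Finite ∧ ∀ z : S, (∀ i ∈ I, z.1 i = y.1 i) → ∀ n ∈ J, F z n = F y n := by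
  have hnear : ∀ᶠ z in 𝓝 y, ∀ n ∈ J, F z n = F y n := by
    refine (eventually_all_finset J).2 fun n _ => tendsto_pure.1 ?_
    simpa only [nhds_discrete, Function.comp_def] using ((continuous_apply n).comp hF).tendsto y
  rw [nhds_subtype, eventually_comap, Filter.Eventually, nhds_pi] at hnear
  simp only [nhds_discrete] at hnear
  obtain ⟨I, hI, hIy⟩ := mem_pi_pure.1 hnear
  exact ⟨I, hI, fun z hz => hIy z.1 hz z rfl⟩

theorem stmt16_general (x : Set ℕ)
    (Γ : {f : ℕ → Bool // (toSet f).Infinite ∧ toSet f ⊆ x} → (ℕ → Bool))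
    (hcont : Continuous Γ)
    (hinit : ∀ y z, ¬ (toSet (Γ y) ⊆ toSet (Γ z) ∧ toSet (Γ y) ≠ toSet (Γ z) ∧
      ∀ a ∈ toSet (Γ y), ∀ b ∈ toSet (Γ z) \ toSet (Γ y), a < b))
    (y : {f : ℕ → Bool // (toSet f).Infinite ∧ toSet f ⊆ x})
    (hfin : (toSet (Γ y)).Finite) :
    ∀ x' : {f : ℕ → Bool // (toSet f).Infinite ∧ toSet f ⊆ x},
      ∃ x'' : {f : ℕ → Bool // (toSet f).Infinite ∧ toSet f ⊆ x},
        (symmDiff (toSet x''.1) (toSet x'.1)).Finite ∧ Γ x'' = Γ y := by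
  classical
  intro x'
  obtain ⟨M, hM⟩ := hfin.bddAbove
  obtain ⟨I, hI, hIy⟩ := exists_finite_forall_eq_of_continuous hcont y (Finset.Iic M)
  let x'' : {f : ℕ → Bool // (toSet f).Infinite ∧ toSet f ⊆ x} :=
    ⟨I.piecewise y.1 x'.1, (x'.2.1.sdiff hI).mono toSet_diff_subset_toSet_piecewise,
      toSet_piecewise_subset.trans (Set.union_subset y.2.2 x'.2.2)⟩
  have hagree : ∀ n ≤ M, Γ x'' n = Γ y n := fun n hn =>
    hIy x'' (fun i hi => I.piecewise_eq_of_mem _ _ hi) n (Finset.mem_Iic.2 hn)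
  refine ⟨x'', hI.subset symmDiff_toSet_piecewise_subset, ?_⟩
  rcases toSet_eq_or_isProperInitialSegment hM hagree with heq | hproper
  · exact (toSet_injective heq).symm
  · exact absurd hproper (hinit y x'')

theorem stmt16 (x : Set ℕ) (hx : x.Infinite)
    (Γ : {f : ℕ → Bool // (toSet f).Infinite ∧ toSet f ⊆ x} → (ℕ → Bool))
    (hcont : Continuous Γ)
    (hinit : ∀ y z, ¬ (toSet (Γ y) ⊆ toSet (Γ z) ∧ toSet (Γ y) ≠ toSet (Γ z) ∧
      ∀ a ∈ toSet (Γ y), ∀ b ∈ toSet (Γ z) \ toSet (Γ y), a < b))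
    (y : {f : ℕ → Bool // (toSet f).Infinite ∧ toSet f ⊆ x})
    (hfin : (toSet (Γ y)).Finite) :
    ∀ x' : {f : ℕ → Bool // (toSet f).Infinite ∧ toSet f ⊆ x},
      ∃ x'' : {f : ℕ → Bool // (toSet f).Infinite ∧ toSet f ⊆ x},
        (symmDiff (toSet x''.1) (toSet x'.1)).Finite ∧ Γ x'' = Γ y :=
  stmt16_general x Γ hcont hinit y hfin
end

section
/- Suppose for each n there are sₙ ∈ [ℕ]^{<ℕ}, infinite xₙ ⊆ ℕ, and countable sets Cₙ with s₀ ⊂ s₁ ⊂ ⋯, x₀ ⊇ x₁ ⊇ ⋯, max sₙ < min xₙ, s_{n+1} = sₙ ∪ {min xₙ}, and the property: for every almost disjoint infinite y, z ⊆ sₙ ∪ xₙ, fₙ(y) = fₙ(z) implies fₙ(y) ∈ Cₙ. Let x = ⋃ₙ sₙ and C = ⋃ₙ Cₙ. Then x is infinite, C is countable, and for every almost disjoint infinite y, z ⊆ x and every n, fₙ(y) = fₙ(z) implies fₙ(y) ∈ C. -/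
theorem stmt19 (f : ℕ → Set ℕ → (ℕ → Bool)) (s x : ℕ → Set ℕ) (C : ℕ → Set (ℕ → Bool))
    (hsfin : ∀ n, (s n).Finite) (hsmono : ∀ n, s n ⊂ s (n+1))
    (hxmono : ∀ n, x (n+1) ⊆ x n) (hxinf : ∀ n, (x n).Infinite)
    (hsep : ∀ n, ∀ a ∈ s n, ∀ b ∈ x n, a < b)
    (hsucc : ∀ n, s (n+1) = s n ∪ {sInf (x n)})
    (hCcnt : ∀ n, (C n).Countable)
    (hprop : ∀ n, ∀ y z : Set ℕ, y.Infinite → z.Infinite → y ⊆ s n ∪ x n →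
      z ⊆ s n ∪ x n → (y ∩ z).Finite → f n y = f n z → f n y ∈ C n) :
    (⋃ n, s n).Infinite ∧ (⋃ n, C n).Countable ∧
      ∀ y z : Set ℕ, y.Infinite → z.Infinite → y ⊆ ⋃ n, s n → z ⊆ ⋃ n, s n →
        (y ∩ z).Finite → ∀ n, f n y = f n z → f n y ∈ ⋃ m, C m := by
  have hmono : Monotone s := monotone_nat_of_le_succ fun n => (hsmono n).subset
  have hxanti : Antitone x := antitone_nat_of_succ_le hxmono
  have hmem : ∀ k, sInf (x k) ∈ x k := fun k => Nat.sInf_mem (hxinf k).nonempty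
  have hginS : ∀ k, sInf (x k) ∈ s (k+1) := by
    intro k
    rw [hsucc]
    exact Set.mem_union_right _ rfl
  have hsub : ∀ n m, s m ⊆ s n ∪ x n := by
    intro n m
    rcases le_or_gt m n with h | h
    · exact (hmono h).trans Set.subset_union_left
    · have key : ∀ k, s (n + k) ⊆ s n ∪ x n := by
        intro k
        induction k with
        | zero => exact Set.subset_union_left
        | succ k ih =>
          rw [← Nat.add_assoc, hsucc]
          refine Set.union_subset ih ?_
          intro a ha
          simp only [Set.mem_singleton_iff] at ha
          subst ha
          exact Set.mem_union_right _ (hxanti (Nat.le_add_right n k) (hmem _))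
      have := key (m - n)
      rwa [Nat.add_sub_cancel' h.le] at this
  refine ⟨?_, Set.countable_iUnion hCcnt, ?_⟩
  · have hsm : StrictMono fun n => sInf (x n) := by
      intro m n hmn
      exact hsep n _ (hmono hmn (hginS m)) _ (hmem n)
    exact Set.infinite_of_injective_forall_mem (f := fun n => sInf (x n))
      hsm.injective (fun n => Set.mem_iUnion.2 ⟨n + 1, hginS n⟩)
  · intro y z hy hz hys hzs hyz n hfy
    have hy' : y ⊆ s n ∪ x n := hys.trans (Set.iUnion_subset fun m => hsub n m)
    have hz' : z ⊆ s n ∪ x n := hzs.trans (Set.iUnion_subset fun m => hsub n m)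
    exact Set.mem_iUnion.2 ⟨n, hprop n y z hy hz hy' hz' hyz hfy⟩
end
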